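/- Improvement from the plug-in step size (random-reset case). Let π and π' be policies of a finite-horizon MDP with rewards bounded in [0, R_max], let Â be a real number with 0 ≤ Â ≤ H²·R_max, and set α̂ = Â/(H²·R_max) ∈ [0,1]. Then the mixture policy π_α̂ = (1−α̂)π + α̂π' satisfies J(π_α̂) − J(π) ≥ Â·(2·𝔸_{π,μ}(π') − Â)/(2·H·R_max). -/
import Mathlib


open Finset MeasureTheory

attribute [local instance] Classical.propDecidable

/-- A finite-horizon MDP with finite state space `X`, finite action space `Y`,
horizon `H ≥ 1`, initial distribution `μ`, transition kernels `P` and rewards `r`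
(used for time steps `h ∈ {1, …, H}`). -/
structure MDP (X Y : Type*) [Fintype X] [Fintype Y] where
  H : ℕ
  H_pos : 1 ≤ H
  μ : X → ℝ
  μ_nonneg : ∀ x, 0 ≤ μ x
  μ_sum_one : ∑ x, μ x = 1
  P : ℕ → X → Y → X → ℝ
  P_nonneg : ∀ h x y x', 0 ≤ P h x y x'
  P_sum_one : ∀ h x y, ∑ x', P h x y x' = 1
  r : ℕ → X → Y → ℝ

variable {X Y : Type*} [Fintype X] [Fintype Y]

/-- A policy assigns to each time step and state a probability distribution over actions. -/
def IsPolicy (M : MDP X Y) (π : ℕ → X → Y → ℝ) : Prop :=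
  (∀ h x y, 0 ≤ π h x y) ∧ ∀ h x, ∑ y, π h x y = 1

/-- Value function `V_h^π(x)`, defined by backwards recursion with `V_{H+1}^π ≡ 0`. -/
noncomputable def Vval (M : MDP X Y) (π : ℕ → X → Y → ℝ) (h : ℕ) (x : X) : ℝ :=
  if hh : M.H < h then 0
  else ∑ y, π h x y * (M.r h x y + ∑ x', M.P h x y x' * Vval M π (h + 1) x')
termination_by M.H + 1 - h
decreasing_by omega

/-- Action-value function `Q_h^π(x,y)`. -/
noncomputable def Qval (M : MDP X Y) (π : ℕ → X → Y → ℝ) (h : ℕ) (x : X) (y : Y) : ℝ :=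
  M.r h x y + ∑ x', M.P h x y x' * Vval M π (h + 1) x'

/-- Advantage function `A_h^π(x,y) = Q_h^π(x,y) − V_h^π(x)`. -/
noncomputable def Aval (M : MDP X Y) (π : ℕ → X → Y → ℝ) (h : ℕ) (x : X) (y : Y) : ℝ :=
  Qval M π h x y - Vval M π h x

/-- Time-`h` state distribution `d_π^h` (for `h ∈ {1, …, H}`), with `d_π^1 = μ`. -/
noncomputable def dState (M : MDP X Y) (π : ℕ → X → Y → ℝ) : ℕ → X → ℝ
  | 0 => M.μ
  | 1 => M.μ
  | (h + 2) => fun x' => ∑ x, ∑ y, dState M π (h + 1) x * π (h + 1) x y * M.P (h + 1) x y x'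

/-- Expected return `J(π)`. -/
noncomputable def J (M : MDP X Y) (π : ℕ → X → Y → ℝ) : ℝ :=
  ∑ x, M.μ x * Vval M π 1 x

/-- Policy advantage `𝔸_{π,μ}(π') = (1/H) Σ_h E_{x~d_π^h} E_{y~π'_h(·|x)}[A_h^π(x,y)]`. -/
noncomputable def polAdv (M : MDP X Y) (π π' : ℕ → X → Y → ℝ) : ℝ :=
  ((M.H : ℝ))⁻¹ * ∑ h ∈ Icc 1 M.H, ∑ x, dState M π h x * ∑ y, π' h x y * Aval M π h x y

/-- The `τ`-improvable set at time `h`: states where `max_y A_h^π(x,y) ≥ τ`. -/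
noncomputable def Gset (M : MDP X Y) (π : ℕ → X → Y → ℝ) (τ : ℝ) (h : ℕ) : Set X :=
  {x | τ ≤ ⨆ y, Aval M π h x y}

/-- `p_{π,h}`: probability of the `τ`-improvable set at time `h` under `d_π^h`. -/
noncomputable def pGh (M : MDP X Y) (π : ℕ → X → Y → ℝ) (τ : ℝ) (h : ℕ) : ℝ :=
  ∑ x, if x ∈ Gset M π τ h then dState M π h x else 0

/-- Coverage `p_π = (1/H) Σ_h p_{π,h}`. -/
noncomputable def coverage (M : MDP X Y) (π : ℕ → X → Y → ℝ) (τ : ℝ) : ℝ :=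
  ((M.H : ℝ))⁻¹ * ∑ h ∈ Icc 1 M.H, pGh M π τ h

/-- Conditional policy advantage on the improvable set,
`𝔸^G_{π,μ}(π') = E[A_h^π(x,y) | x ∈ G_{h,τ}]` with `h ~ Unif{1,…,H}`, `x ~ d_π^h`,
`y ~ π'_h(·|x)`. -/
noncomputable def condAdvG (M : MDP X Y) (π π' : ℕ → X → Y → ℝ) (τ : ℝ) : ℝ :=
  (((M.H : ℝ))⁻¹ * ∑ h ∈ Icc 1 M.H, ∑ x,
      if x ∈ Gset M π τ h then dState M π h x * ∑ y, π' h x y * Aval M π h x y else 0)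
    / coverage M π τ

/-- Conditional policy advantage off the improvable set,
`𝔸^{Gc}_{π,μ}(π') = E[A_h^π(x,y) | x ∉ G_{h,τ}]`. -/
noncomputable def condAdvGc (M : MDP X Y) (π π' : ℕ → X → Y → ℝ) (τ : ℝ) : ℝ :=
  (((M.H : ℝ))⁻¹ * ∑ h ∈ Icc 1 M.H, ∑ x,
      if x ∉ Gset M π τ h then dState M π h x * ∑ y, π' h x y * Aval M π h x y else 0)
    / (1 - coverage M π τ)

/-- Total-variation distance between two (finitely supported) distributions. -/
noncomputable def tvDist (p q : X → ℝ) : ℝ := (1 / 2) * ∑ x, |p x - q x|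

/-- The statewise mixture policy `π_α = (1−α)π + απ'`. -/
def mix (α : ℝ) (π π' : ℕ → X → Y → ℝ) : ℕ → X → Y → ℝ :=
  fun h x y => (1 - α) * π h x y + α * π' h x y

/-- `ε_CPI = max_{h ∈ {1,…,H}, x} |E_{y~π'_h(·|x)}[A_h^π(x,y)]|`. -/
noncomputable def epsCPI (M : MDP X Y) (π π' : ℕ → X → Y → ℝ) : ℝ :=
  ⨆ h : (Icc 1 M.H : Finset ℕ), ⨆ x : X, |∑ y, π' h.1 x y * Aval M π h.1 x y|


section Aux

variable {X Y : Type*} [Fintype X] [Fintype Y]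

lemma Vval_of_lt (M : MDP X Y) (π : ℕ → X → Y → ℝ) {h : ℕ} (hh : M.H < h) (x : X) :
    Vval M π h x = 0 := by rw [Vval]; simp [hh]

lemma Vval_of_le (M : MDP X Y) (π : ℕ → X → Y → ℝ) {h : ℕ} (hh : ¬ M.H < h) (x : X) :
    Vval M π h x
      = ∑ y, π h x y * (M.r h x y + ∑ x', M.P h x y x' * Vval M π (h + 1) x') := by
  rw [Vval]; simp [hh]

lemma Vval_bounds (M : MDP X Y) (π : ℕ → X → Y → ℝ) (hπ : IsPolicy M π) (Rmax : ℝ)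
    (hr : ∀ h ∈ Icc 1 M.H, ∀ x y, M.r h x y ∈ Set.Icc 0 Rmax) (hR : 0 ≤ Rmax)
    (h : ℕ) (h1 : 1 ≤ h) (x : X) :
    0 ≤ Vval M π h x ∧ Vval M π h x ≤ ((M.H + 1 - h : ℕ) : ℝ) * Rmax := by
  by_cases hh : M.H < h
  · rw [Vval_of_lt M π hh]
    exact ⟨le_refl 0, by positivity⟩
  · push_neg at hh
    have ih : ∀ x', 0 ≤ Vval M π (h+1) x' ∧
        Vval M π (h+1) x' ≤ ((M.H + 1 - (h+1) : ℕ) : ℝ) * Rmax :=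
      fun x' => Vval_bounds M π hπ Rmax hr hR (h+1) (by omega) x'
    have hrh := hr h (by simp [h1, hh])
    rw [Vval_of_le M π (not_lt.mpr hh)]
    have hsumV : ∀ y, 0 ≤ ∑ x', M.P h x y x' * Vval M π (h+1) x' ∧
        (∑ x', M.P h x y x' * Vval M π (h+1) x') ≤ ((M.H - h : ℕ) : ℝ) * Rmax := by
      intro y
      constructor
      · exact Finset.sum_nonneg fun x' _ =>
          mul_nonneg (M.P_nonneg h x y x') (ih x').1
      · calc (∑ x', M.P h x y x' * Vval M π (h+1) x')
            ≤ ∑ x', M.P h x y x' * (((M.H - h : ℕ) : ℝ) * Rmax) := by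
              apply Finset.sum_le_sum
              intro x' _
              have := (ih x').2
              have heq : (M.H + 1 - (h+1) : ℕ) = (M.H - h : ℕ) := by omega
              rw [heq] at this
              exact mul_le_mul_of_nonneg_left this (M.P_nonneg h x y x')
          _ = ((M.H - h : ℕ) : ℝ) * Rmax := by
              rw [← Finset.sum_mul, M.P_sum_one, one_mul]
    constructor
    · apply Finset.sum_nonneg
      intro y _
      exact mul_nonneg (hπ.1 h x y)
        (add_nonneg (hrh x y).1 (hsumV y).1)
    · have hc : ((M.H + 1 - h : ℕ) : ℝ) = ((M.H - h : ℕ) : ℝ) + 1 := by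
        have : (M.H + 1 - h : ℕ) = (M.H - h : ℕ) + 1 := by omega
        rw [this]; push_cast; ring
      calc (∑ y, π h x y * (M.r h x y + ∑ x', M.P h x y x' * Vval M π (h + 1) x'))
          ≤ ∑ y, π h x y * (Rmax + ((M.H - h : ℕ) : ℝ) * Rmax) := by
            apply Finset.sum_le_sum
            intro y _
            exact mul_le_mul_of_nonneg_left
              (add_le_add (hrh x y).2 (hsumV y).2) (hπ.1 h x y)
        _ = ((M.H + 1 - h : ℕ) : ℝ) * Rmax := by
            rw [← Finset.sum_mul, hπ.2 h x, one_mul, hc]; ring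
termination_by M.H + 1 - h

lemma Aval_abs_le (M : MDP X Y) (π : ℕ → X → Y → ℝ) (hπ : IsPolicy M π) (Rmax : ℝ)
    (hr : ∀ h ∈ Icc 1 M.H, ∀ x y, M.r h x y ∈ Set.Icc 0 Rmax) (hR : 0 ≤ Rmax)
    {h : ℕ} (h1 : 1 ≤ h) (hh : h ≤ M.H) (x : X) (y : Y) :
    |Aval M π h x y| ≤ ((M.H + 1 - h : ℕ) : ℝ) * Rmax := by
  have hV := Vval_bounds M π hπ Rmax hr hR h h1 x
  have hQ : 0 ≤ Qval M π h x y ∧ Qval M π h x y ≤ ((M.H + 1 - h : ℕ) : ℝ) * Rmax := by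
    unfold Qval
    have hrh := hr h (by simp [h1, hh]) x y
    have hsum : 0 ≤ ∑ x', M.P h x y x' * Vval M π (h+1) x' ∧
        (∑ x', M.P h x y x' * Vval M π (h+1) x') ≤ ((M.H - h : ℕ) : ℝ) * Rmax := by
      constructor
      · exact Finset.sum_nonneg fun x' _ => mul_nonneg (M.P_nonneg h x y x')
          (Vval_bounds M π hπ Rmax hr hR (h+1) (by omega) x').1
      · calc (∑ x', M.P h x y x' * Vval M π (h+1) x')
            ≤ ∑ x', M.P h x y x' * (((M.H - h : ℕ) : ℝ) * Rmax) := by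
              apply Finset.sum_le_sum
              intro x' _
              have := (Vval_bounds M π hπ Rmax hr hR (h+1) (by omega) x').2
              have heq : (M.H + 1 - (h+1) : ℕ) = (M.H - h : ℕ) := by omega
              rw [heq] at this
              exact mul_le_mul_of_nonneg_left this (M.P_nonneg h x y x')
          _ = ((M.H - h : ℕ) : ℝ) * Rmax := by
              rw [← Finset.sum_mul, M.P_sum_one, one_mul]
    have hc : ((M.H + 1 - h : ℕ) : ℝ) = ((M.H - h : ℕ) : ℝ) + 1 := by
      have : (M.H + 1 - h : ℕ) = (M.H - h : ℕ) + 1 := by omega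
      rw [this]; push_cast; ring
    constructor
    · exact add_nonneg hrh.1 hsum.1
    · rw [hc]; have := hrh.2; have := hsum.2; linarith
  unfold Aval
  rw [abs_le]
  exact ⟨by linarith [hQ.1, hV.2], by linarith [hQ.2, hV.1]⟩

lemma sum_pi_Aval (M : MDP X Y) (π : ℕ → X → Y → ℝ) (hπ : IsPolicy M π)
    {h : ℕ} (hh : h ≤ M.H) (x : X) :
    ∑ y, π h x y * Aval M π h x y = 0 := by
  unfold Aval Qval
  have h1 : ∑ y, π h x y * (M.r h x y + ∑ x', M.P h x y x' * Vval M π (h + 1) x')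
      = Vval M π h x := (Vval_of_le M π (not_lt.mpr hh) x).symm
  have h2 : ∑ y, π h x y * Vval M π h x = Vval M π h x := by
    rw [← Finset.sum_mul, hπ.2 h x, one_mul]
  calc ∑ y, π h x y * ((M.r h x y + ∑ x', M.P h x y x' * Vval M π (h + 1) x')
          - Vval M π h x)
      = (∑ y, π h x y * (M.r h x y + ∑ x', M.P h x y x' * Vval M π (h + 1) x'))
        - ∑ y, π h x y * Vval M π h x := by
        rw [← Finset.sum_sub_distrib]; apply Finset.sum_congr rfl; intros; ring
    _ = 0 := by rw [h1, h2, sub_self]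

lemma dState_nonneg (M : MDP X Y) (π : ℕ → X → Y → ℝ) (hπ : IsPolicy M π) :
    ∀ h x, 0 ≤ dState M π h x := by
  intro h
  induction h using Nat.strong_induction_on with
  | _ h ih =>
    match h with
    | 0 => exact M.μ_nonneg
    | 1 => exact M.μ_nonneg
    | (k+2) =>
      intro x'
      show 0 ≤ ∑ x, ∑ y, dState M π (k+1) x * π (k+1) x y * M.P (k+1) x y x'
      apply Finset.sum_nonneg; intro x _
      apply Finset.sum_nonneg; intro y _
      exact mul_nonneg (mul_nonneg (ih (k+1) (by omega) x) (hπ.1 _ _ _))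
        (M.P_nonneg _ _ _ _)

lemma dState_sum_one (M : MDP X Y) (π : ℕ → X → Y → ℝ) (hπ : IsPolicy M π) :
    ∀ h, ∑ x, dState M π h x = 1 := by
  intro h
  induction h using Nat.strong_induction_on with
  | _ h ih =>
    match h with
    | 0 => exact M.μ_sum_one
    | 1 => exact M.μ_sum_one
    | (k+2) =>
      show (∑ x', ∑ x, ∑ y, dState M π (k+1) x * π (k+1) x y * M.P (k+1) x y x') = 1
      rw [Finset.sum_comm]
      have : ∀ x ∈ Finset.univ (α := X),
          (∑ x', ∑ y, dState M π (k+1) x * π (k+1) x y * M.P (k+1) x y x')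
            = dState M π (k+1) x := by
        intro x _
        rw [Finset.sum_comm]
        have : ∀ y ∈ Finset.univ (α := Y),
            (∑ x', dState M π (k+1) x * π (k+1) x y * M.P (k+1) x y x')
              = dState M π (k+1) x * π (k+1) x y := by
          intro y _
          rw [← Finset.mul_sum, M.P_sum_one, mul_one]
        rw [Finset.sum_congr rfl this, ← Finset.mul_sum, hπ.2, mul_one]
      rw [Finset.sum_congr rfl this, ih (k+1) (by omega)]


lemma isPolicy_mix (M : MDP X Y) (π π' : ℕ → X → Y → ℝ)
    (hπ : IsPolicy M π) (hπ' : IsPolicy M π') {α : ℝ} (h0 : 0 ≤ α) (h1 : α ≤ 1) :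
    IsPolicy M (mix α π π') := by
  constructor
  · intro h x y
    exact add_nonneg (mul_nonneg (by linarith) (hπ.1 h x y))
      (mul_nonneg h0 (hπ'.1 h x y))
  · intro h x
    simp only [mix]
    rw [Finset.sum_add_distrib, ← Finset.mul_sum, ← Finset.mul_sum, hπ.2, hπ'.2]
    ring

lemma tv_bound (M : MDP X Y) (π π' : ℕ → X → Y → ℝ)
    (hπ : IsPolicy M π) (hπ' : IsPolicy M π') {α : ℝ} (h0 : 0 ≤ α) (h1 : α ≤ 1) :
    ∀ h, 1 ≤ h →
      ∑ x, |dState M (mix α π π') h x - dState M π h x| ≤ 2 * α * ((h - 1 : ℕ) : ℝ) := by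
  intro h hh
  induction h, hh using Nat.le_induction with
  | base => simp [dState]
  | succ n hn ih =>
    obtain ⟨k, rfl⟩ : ∃ k, n = k + 1 := ⟨n - 1, by omega⟩
    set σ := mix α π π' with hσdef
    have hσ : IsPolicy M σ := isPolicy_mix M π π' hπ hπ' h0 h1
    have key : ∀ x' : X, |dState M σ (k+2) x' - dState M π (k+2) x'|
        ≤ ∑ x, ∑ y, |dState M σ (k+1) x * σ (k+1) x y
            - dState M π (k+1) x * π (k+1) x y| * M.P (k+1) x y x' := by
      intro x'
      show |(∑ x, ∑ y, dState M σ (k+1) x * σ (k+1) x y * M.P (k+1) x y x')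
          - ∑ x, ∑ y, dState M π (k+1) x * π (k+1) x y * M.P (k+1) x y x'| ≤ _
      rw [← Finset.sum_sub_distrib]
      refine le_trans (Finset.abs_sum_le_sum_abs _ _) (Finset.sum_le_sum ?_)
      intro x _
      rw [← Finset.sum_sub_distrib]
      refine le_trans (Finset.abs_sum_le_sum_abs _ _) (Finset.sum_le_sum ?_)
      intro y _
      rw [← sub_mul, abs_mul, abs_of_nonneg (M.P_nonneg _ _ _ _)]
    calc ∑ x', |dState M σ (k+2) x' - dState M π (k+2) x'|
        ≤ ∑ x', ∑ x, ∑ y, |dState M σ (k+1) x * σ (k+1) x y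
            - dState M π (k+1) x * π (k+1) x y| * M.P (k+1) x y x' :=
          Finset.sum_le_sum fun x' _ => key x'
      _ = ∑ x, ∑ y, |dState M σ (k+1) x * σ (k+1) x y
            - dState M π (k+1) x * π (k+1) x y| := by
          rw [Finset.sum_comm]
          apply Finset.sum_congr rfl; intro x _
          rw [Finset.sum_comm]
          apply Finset.sum_congr rfl; intro y _
          rw [← Finset.mul_sum, M.P_sum_one, mul_one]
      _ ≤ ∑ x, ∑ y, (|dState M σ (k+1) x - dState M π (k+1) x| * σ (k+1) x y
            + dState M π (k+1) x * (α * |π' (k+1) x y - π (k+1) x y|)) := by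
          apply Finset.sum_le_sum; intro x _
          apply Finset.sum_le_sum; intro y _
          have hrw : dState M σ (k+1) x * σ (k+1) x y
              - dState M π (k+1) x * π (k+1) x y
              = (dState M σ (k+1) x - dState M π (k+1) x) * σ (k+1) x y
                + dState M π (k+1) x * (σ (k+1) x y - π (k+1) x y) := by ring
          rw [hrw]
          refine le_trans (abs_add_le _ _) (add_le_add ?_ ?_)
          · rw [abs_mul, abs_of_nonneg (hσ.1 _ _ _)]
          · rw [abs_mul, abs_of_nonneg (dState_nonneg M π hπ _ _)]
            apply mul_le_mul_of_nonneg_left _ (dState_nonneg M π hπ _ _)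
            have : σ (k+1) x y - π (k+1) x y = α * (π' (k+1) x y - π (k+1) x y) := by
              simp only [hσdef, mix]; ring
            rw [this, abs_mul, abs_of_nonneg h0]
      _ = (∑ x, |dState M σ (k+1) x - dState M π (k+1) x|)
            + ∑ x, dState M π (k+1) x * (α * ∑ y, |π' (k+1) x y - π (k+1) x y|) := by
          rw [← Finset.sum_add_distrib]
          apply Finset.sum_congr rfl; intro x _
          rw [Finset.sum_add_distrib, ← Finset.mul_sum, hσ.2, mul_one, ← Finset.mul_sum,
            ← Finset.mul_sum]
      _ ≤ 2 * α * ((k + 1 - 1 : ℕ) : ℝ) + ∑ x, dState M π (k+1) x * (α * 2) := by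
          refine add_le_add ih (Finset.sum_le_sum fun x _ => ?_)
          apply mul_le_mul_of_nonneg_left _ (dState_nonneg M π hπ _ _)
          apply mul_le_mul_of_nonneg_left _ h0
          calc ∑ y, |π' (k+1) x y - π (k+1) x y|
              ≤ ∑ y, (π' (k+1) x y + π (k+1) x y) := by
                apply Finset.sum_le_sum; intro y _
                have ha := hπ'.1 (k+1) x y
                have hb := hπ.1 (k+1) x y
                exact abs_sub_le_iff.mpr ⟨by linarith, by linarith⟩
            _ = 2 := by rw [Finset.sum_add_distrib, hπ'.2, hπ.2]; norm_num
      _ = 2 * α * ((k + 2 - 1 : ℕ) : ℝ) := by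
          rw [← Finset.sum_mul, dState_sum_one M π hπ, one_mul]
          push_cast [Nat.add_sub_cancel]
          ring


lemma perf_diff (M : MDP X Y) (π σ : ℕ → X → Y → ℝ) (hσ : IsPolicy M σ) :
    J M σ - J M π
      = ∑ h ∈ Icc 1 M.H, ∑ x, dState M σ h x * ∑ y, σ h x y * Aval M π h x y := by
  set T : ℕ → ℝ := fun h => ∑ x, dState M σ h x * (Vval M σ h x - Vval M π h x) with hT
  have pointwise : ∀ h, 1 ≤ h → h ≤ M.H → ∀ x : X,
      Vval M σ h x - Vval M π h x
        = (∑ y, σ h x y * Aval M π h x y)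
          + ∑ y, σ h x y * ∑ x', M.P h x y x'
              * (Vval M σ (h+1) x' - Vval M π (h+1) x') := by
    intro h h1 hh x
    have hs : ∑ y, σ h x y * Vval M π h x = Vval M π h x := by
      rw [← Finset.sum_mul, hσ.2 h x, one_mul]
    have e1 : ∑ y, σ h x y * Aval M π h x y
        = (∑ y, σ h x y * (M.r h x y + ∑ x', M.P h x y x' * Vval M π (h+1) x'))
          - Vval M π h x := by
      unfold Aval Qval
      rw [← hs]
      rw [← Finset.sum_sub_distrib]
      apply Finset.sum_congr rfl; intro y _
      rw [hs]; ring
    rw [Vval_of_le M σ (not_lt.mpr hh) x, e1]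
    have e2 : (∑ y, σ h x y * (M.r h x y + ∑ x', M.P h x y x' * Vval M σ (h+1) x'))
        = (∑ y, σ h x y * (M.r h x y + ∑ x', M.P h x y x' * Vval M π (h+1) x'))
          + ∑ y, σ h x y * ∑ x', M.P h x y x'
              * (Vval M σ (h+1) x' - Vval M π (h+1) x') := by
      rw [← Finset.sum_add_distrib]
      apply Finset.sum_congr rfl
      intro y _
      have expand : ∑ x', M.P h x y x' * (Vval M σ (h+1) x' - Vval M π (h+1) x')
          = (∑ x', M.P h x y x' * Vval M σ (h+1) x')
            - ∑ x', M.P h x y x' * Vval M π (h+1) x' := by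
        rw [← Finset.sum_sub_distrib]; apply Finset.sum_congr rfl; intros; ring
      rw [expand]; ring
    rw [e2]; ring
  have step : ∀ h, 1 ≤ h → h ≤ M.H →
      T h - T (h+1) = ∑ x, dState M σ h x * ∑ y, σ h x y * Aval M π h x y := by
    intro h h1 hh
    obtain ⟨k, rfl⟩ : ∃ k, h = k + 1 := ⟨h - 1, by omega⟩
    have hnext : T (k+2) = ∑ x, dState M σ (k+1) x * ∑ y, σ (k+1) x y *
        ∑ x', M.P (k+1) x y x' * (Vval M σ (k+2) x' - Vval M π (k+2) x') := by
      show (∑ x', (∑ x, ∑ y, dState M σ (k+1) x * σ (k+1) x y * M.P (k+1) x y x')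
          * (Vval M σ (k+2) x' - Vval M π (k+2) x')) = _
      simp only [Finset.sum_mul, Finset.mul_sum]
      rw [Finset.sum_comm]
      apply Finset.sum_congr rfl; intro x _
      rw [Finset.sum_comm]
      apply Finset.sum_congr rfl; intro y _
      apply Finset.sum_congr rfl; intro x' _
      ring
    have hTh : T (k+1) = (∑ x, dState M σ (k+1) x * ∑ y, σ (k+1) x y * Aval M π (k+1) x y)
        + T (k+2) := by
      rw [hnext, hT]
      simp only
      rw [← Finset.sum_add_distrib]
      apply Finset.sum_congr rfl; intro x _
      rw [pointwise (k+1) h1 hh x]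
      ring
    rw [hTh]; ring
  have telescope : ∑ h ∈ Icc 1 M.H, (T h - T (h+1)) = T 1 - T (M.H + 1) := by
    have gen : ∀ n : ℕ, ∑ h ∈ Icc 1 n, (T h - T (h+1)) = T 1 - T (n + 1) := by
      intro n
      induction n with
      | zero => simp
      | succ n ih =>
        rw [Finset.sum_Icc_succ_top (by omega : 1 ≤ n + 1), ih]
        ring
    exact gen M.H
  have hTend : T (M.H + 1) = 0 := by
    rw [hT]
    simp only
    apply Finset.sum_eq_zero
    intro x _
    rw [Vval_of_lt M σ (by omega) x, Vval_of_lt M π (by omega) x]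
    ring
  have hT1 : T 1 = J M σ - J M π := by
    rw [hT]
    show (∑ x, M.μ x * (Vval M σ 1 x - Vval M π 1 x)) = J M σ - J M π
    unfold J
    rw [← Finset.sum_sub_distrib]
    apply Finset.sum_congr rfl; intros; ring
  calc J M σ - J M π = T 1 - T (M.H + 1) := by rw [hT1, hTend]; ring
    _ = ∑ h ∈ Icc 1 M.H, (T h - T (h+1)) := telescope.symm
    _ = _ := by
        apply Finset.sum_congr rfl
        intro h hmem
        rw [Finset.mem_Icc] at hmem
        exact step h hmem.1 hmem.2

end Aux

/-- **Improvement from the plug-in step size (random-reset case).**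
With rewards in `[0, R_max]`, `0 ≤ Â ≤ H²·R_max` and `α̂ = Â/(H²·R_max)`,
`J(π_α̂) − J(π) ≥ Â·(2·𝔸_{π,μ}(π') − Â)/(2·H·R_max)`. -/
theorem plugin_step_size_random
    {X Y : Type*} [Fintype X] [Fintype Y] [Nonempty X] [Nonempty Y]
    (M : MDP X Y) (π π' : ℕ → X → Y → ℝ)
    (hπ : IsPolicy M π) (hπ' : IsPolicy M π')
    (Rmax : ℝ) (hr : ∀ h ∈ Icc 1 M.H, ∀ x y, M.r h x y ∈ Set.Icc 0 Rmax)
    (Ahat : ℝ) (hAhat : Ahat ∈ Set.Icc 0 ((M.H : ℝ) ^ 2 * Rmax)) :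
    Ahat * (2 * polAdv M π π' - Ahat) / (2 * (M.H : ℝ) * Rmax)
      ≤ J M (mix (Ahat / ((M.H : ℝ) ^ 2 * Rmax)) π π') - J M π := by
  have hR0 : 0 ≤ Rmax := by
    have h1 := hr 1 (by simp [M.H_pos]) (Classical.arbitrary X) (Classical.arbitrary Y)
    exact h1.1.trans h1.2
  rcases hR0.eq_or_lt with hR | hR
  · have hA0 : Ahat = 0 := by
      have h2 := hAhat.2
      rw [← hR] at h2
      have h1 := hAhat.1
      simp at h2
      linarith
    have hmix : mix (Ahat / ((M.H:ℝ)^2 * Rmax)) π π' = π := by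
      funext h x y
      simp [mix, hA0]
    rw [hmix, hA0]
    simp
  · have hH1 : (1:ℝ) ≤ (M.H:ℝ) := by exact_mod_cast M.H_pos
    have hHpos : (0:ℝ) < (M.H:ℝ) := by linarith
    have hHne : (M.H:ℝ) ≠ 0 := ne_of_gt hHpos
    have hRne : Rmax ≠ 0 := ne_of_gt hR
    set α := Ahat / ((M.H:ℝ)^2 * Rmax) with hαd
    have hH2R : (0:ℝ) < (M.H:ℝ)^2 * Rmax := by positivity
    have hα0 : 0 ≤ α := div_nonneg hAhat.1 hH2R.le
    have hα1 : α ≤ 1 := (div_le_one hH2R).mpr hAhat.2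
    set σ := mix α π π' with hσd
    have hσpol : IsPolicy M σ := isPolicy_mix M π π' hπ hπ' hα0 hα1
    set g : ℕ → X → ℝ := fun h x => ∑ y, π' h x y * Aval M π h x y with hgd
    set B : ℕ → ℝ := fun h => ((M.H + 1 - h : ℕ) : ℝ) * Rmax with hBd
    have hJ : J M σ - J M π = α * ∑ h ∈ Icc 1 M.H, ∑ x, dState M σ h x * g h x := by
      rw [perf_diff M π σ hσpol]
      calc ∑ h ∈ Icc 1 M.H, ∑ x, dState M σ h x * ∑ y, σ h x y * Aval M π h x y
          = ∑ h ∈ Icc 1 M.H, ∑ x, dState M σ h x * (α * g h x) := by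
            apply Finset.sum_congr rfl; intro h hmem
            rw [Finset.mem_Icc] at hmem
            apply Finset.sum_congr rfl; intro x _
            have hmixA : ∑ y, σ h x y * Aval M π h x y = α * g h x := by
              have e : ∀ y ∈ Finset.univ (α := Y), σ h x y * Aval M π h x y
                  = (1-α) * (π h x y * Aval M π h x y)
                    + α * (π' h x y * Aval M π h x y) := by
                intro y _; simp only [hσd, mix]; ring
              rw [Finset.sum_congr rfl e, Finset.sum_add_distrib, ← Finset.mul_sum,
                ← Finset.mul_sum, sum_pi_Aval M π hπ hmem.2 x, mul_zero, zero_add, hgd]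
            rw [hmixA]
        _ = α * ∑ h ∈ Icc 1 M.H, ∑ x, dState M σ h x * g h x := by
            rw [Finset.mul_sum]
            apply Finset.sum_congr rfl; intro h _
            rw [Finset.mul_sum]
            apply Finset.sum_congr rfl; intro x _
            ring
    have hgB : ∀ h, 1 ≤ h → h ≤ M.H → ∀ x, |g h x| ≤ B h := by
      intro h h1 h2 x
      calc |g h x| ≤ ∑ y, |π' h x y * Aval M π h x y| := Finset.abs_sum_le_sum_abs _ _
        _ ≤ ∑ y, π' h x y * B h := by
            apply Finset.sum_le_sum; intro y _
            rw [abs_mul, abs_of_nonneg (hπ'.1 h x y)]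
            exact mul_le_mul_of_nonneg_left
              (Aval_abs_le M π hπ Rmax hr hR0 h1 h2 x y) (hπ'.1 h x y)
        _ = B h := by rw [← Finset.sum_mul, hπ'.2, one_mul]
    have hBnn : ∀ h, 0 ≤ B h := fun h => by
      simp only [hBd]; positivity
    have hperh : ∀ h ∈ Icc 1 M.H,
        (∑ x, dState M π h x * g h x) - 2 * α * ((h - 1 : ℕ) : ℝ) * B h
          ≤ ∑ x, dState M σ h x * g h x := by
      intro h hmem
      rw [Finset.mem_Icc] at hmem
      have key : (∑ x, dState M π h x * g h x) - (∑ x, dState M σ h x * g h x)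
          ≤ 2 * α * ((h - 1 : ℕ) : ℝ) * B h := by
        calc (∑ x, dState M π h x * g h x) - (∑ x, dState M σ h x * g h x)
            = ∑ x, (dState M π h x * g h x - dState M σ h x * g h x) := by
              rw [Finset.sum_sub_distrib]
          _ ≤ ∑ x, |dState M σ h x - dState M π h x| * B h := by
              apply Finset.sum_le_sum; intro x _
              calc dState M π h x * g h x - dState M σ h x * g h x
                  ≤ |(dState M π h x - dState M σ h x) * g h x| := by
                    rw [← sub_mul]; exact le_abs_self _
                _ = |dState M σ h x - dState M π h x| * |g h x| := by
                    rw [abs_mul, abs_sub_comm]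
                _ ≤ |dState M σ h x - dState M π h x| * B h :=
                    mul_le_mul_of_nonneg_left (hgB h hmem.1 hmem.2 x) (abs_nonneg _)
          _ = (∑ x, |dState M σ h x - dState M π h x|) * B h := by
              rw [Finset.sum_mul]
          _ ≤ 2 * α * ((h - 1 : ℕ) : ℝ) * B h :=
              mul_le_mul_of_nonneg_right
                (tv_bound M π π' hπ hπ' hα0 hα1 h hmem.1) (hBnn h)
      linarith
    have herr : ∑ h ∈ Icc 1 M.H, 2 * α * ((h - 1 : ℕ) : ℝ) * B h
        ≤ α * (M.H:ℝ)^3 * Rmax / 2 := by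
      have hbd : ∀ h ∈ Icc 1 M.H,
          2 * α * ((h - 1 : ℕ) : ℝ) * B h ≤ ((M.H:ℝ)^2/4) * (2*α*Rmax) := by
        intro h hmem
        rw [Finset.mem_Icc] at hmem
        simp only [hBd]
        set a : ℝ := ((h - 1 : ℕ) : ℝ) with had
        set b : ℝ := ((M.H + 1 - h : ℕ) : ℝ) with hbd'
        have habn : ((h - 1) + (M.H + 1 - h) : ℕ) = M.H := by omega
        have hab : a + b = (M.H : ℝ) := by
          rw [had, hbd', ← Nat.cast_add, habn]
        have ha : 0 ≤ a := Nat.cast_nonneg _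
        have hb : 0 ≤ b := Nat.cast_nonneg _
        have hprod : a * b ≤ (M.H:ℝ)^2/4 := by nlinarith [sq_nonneg (a - b)]
        calc 2 * α * a * (b * Rmax) = (a*b) * (2*α*Rmax) := by ring
          _ ≤ ((M.H:ℝ)^2/4) * (2*α*Rmax) :=
              mul_le_mul_of_nonneg_right hprod (by positivity)
      calc ∑ h ∈ Icc 1 M.H, 2 * α * ((h - 1 : ℕ) : ℝ) * B h
          ≤ (Icc 1 M.H).card • (((M.H:ℝ)^2/4) * (2*α*Rmax)) :=
            Finset.sum_le_card_nsmul _ _ _ hbd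
        _ = (M.H : ℝ) * (((M.H:ℝ)^2/4) * (2*α*Rmax)) := by
            rw [Nat.card_Icc]
            simp [nsmul_eq_mul]
        _ = α * (M.H:ℝ)^3 * Rmax / 2 := by ring
    have hSπ : ∑ h ∈ Icc 1 M.H, ∑ x, dState M π h x * g h x
        = (M.H : ℝ) * polAdv M π π' := by
      rw [polAdv]
      simp only [hgd]
      rw [← mul_assoc, mul_inv_cancel₀ hHne, one_mul]
    have hmain : α * (M.H:ℝ) * polAdv M π π' - α^2 * (M.H:ℝ)^3 * Rmax / 2
        ≤ J M σ - J M π := by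
      rw [hJ]
      have h1 : (M.H:ℝ) * polAdv M π π' - α * (M.H:ℝ)^3 * Rmax / 2
          ≤ ∑ h ∈ Icc 1 M.H, ∑ x, dState M σ h x * g h x := by
        have h2 := Finset.sum_le_sum hperh
        rw [Finset.sum_sub_distrib] at h2
        rw [← hSπ]
        linarith
      have h2 := mul_le_mul_of_nonneg_left h1 hα0
      calc α * (M.H:ℝ) * polAdv M π π' - α^2 * (M.H:ℝ)^3 * Rmax / 2
          = α * ((M.H:ℝ) * polAdv M π π' - α * (M.H:ℝ)^3 * Rmax / 2) := by ring
        _ ≤ α * ∑ h ∈ Icc 1 M.H, ∑ x, dState M σ h x * g h x := h2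
    refine le_trans (le_of_eq ?_) hmain
    rw [hαd]
    field_simp
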